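/- arXiv:2601.14988 — 4 statements merged into one kernel-verified Lean document; each statement's English description precedes it below -/
import Mathlib

section
/- If G is an infinite, finitely generated, nilpotent group, then there exists a surjective group homomorphism from G onto the integers ℤ. -/
open Subgroup
open scoped commutatorElement

private lemma comm_central_left {G : Type*} [Group G] (a b z : G)
    (hz : z ∈ Subgroup.center G) : ⁅a * z, b⁆ = ⁅a, b⁆ := by
  have hz' := Subgroup.mem_center_iff.mp hz
  have h1 : ⁅a * z, b⁆ = a * (z * b * z⁻¹) * a⁻¹ * b⁻¹ := by group
  rw [h1, ← hz' b, mul_inv_cancel_right, commutatorElement_def]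

private lemma comm_central_right {G : Type*} [Group G] (a b w : G)
    (hw : w ∈ Subgroup.center G) : ⁅a, b * w⁆ = ⁅a, b⁆ := by
  have hw' := Subgroup.mem_center_iff.mp hw
  have h1 : ⁅a, b * w⁆ = a * b * (w * a⁻¹ * w⁻¹) * b⁻¹ := by group
  rw [h1, ← hw' a⁻¹, mul_inv_cancel_right, commutatorElement_def]

private lemma finite_commutatorSet_of_finite_quot_center {G : Type*} [Group G]
    [Finite (G ⧸ Subgroup.center G)] : Finite (commutatorSet G) := by
  classical
  set Z := Subgroup.center G
  have hsub : commutatorSet G ⊆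
      Set.range (fun p : (G ⧸ Z) × (G ⧸ Z) => ⁅p.1.out, p.2.out⁆) := by
    rintro x ⟨g₁, g₂, rfl⟩
    refine ⟨(QuotientGroup.mk g₁, QuotientGroup.mk g₂), ?_⟩
    obtain ⟨z, hz, hz'⟩ : ∃ z ∈ Z, (QuotientGroup.mk g₁ : G ⧸ Z).out = g₁ * z := by
      refine ⟨g₁⁻¹ * (QuotientGroup.mk g₁ : G ⧸ Z).out, ?_, by group⟩
      rw [← QuotientGroup.eq]
      exact (QuotientGroup.out_eq' _).symm
    obtain ⟨w, hw, hw'⟩ : ∃ w ∈ Z, (QuotientGroup.mk g₂ : G ⧸ Z).out = g₂ * w := by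
      refine ⟨g₂⁻¹ * (QuotientGroup.mk g₂ : G ⧸ Z).out, ?_, by group⟩
      rw [← QuotientGroup.eq]
      exact (QuotientGroup.out_eq' _).symm
    simp only [hz', hw', comm_central_left _ _ _ hz, comm_central_right _ _ _ hw]
  exact Finite.Set.subset _ hsub

private lemma finite_of_fg_nilpotent_finite_abelianization (G : Type*) [Group G]
    [Group.IsNilpotent G] : Group.FG G → Finite (Abelianization G) → Finite G := by
  refine nilpotent_center_quotient_ind
    (P := fun G _ _ => Group.FG G → Finite (Abelianization G) → Finite G) G ?_ ?_
  · intro G _ _ _ _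
    exact Finite.of_subsingleton
  · intro G _ _ ih hfg hab
    haveI := hfg
    set Z := Subgroup.center G
    haveI : Group.FG (G ⧸ Z) :=
      Group.fg_of_surjective (QuotientGroup.mk'_surjective Z)
    have hofsurj : Function.Surjective (Abelianization.of (G := G ⧸ Z)) := fun y =>
      QuotientGroup.induction_on y fun g => ⟨g, rfl⟩
    have hsurj : Function.Surjective (Abelianization.map (QuotientGroup.mk' Z)) := by
      intro y
      obtain ⟨q, rfl⟩ := hofsurj y
      obtain ⟨g, rfl⟩ := QuotientGroup.mk'_surjective Z q
      exact ⟨Abelianization.of g, Abelianization.map_of _ _⟩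
    haveI : Finite (Abelianization (G ⧸ Z)) := Finite.of_surjective _ hsurj
    haveI : Finite (G ⧸ Z) := ih inferInstance inferInstance
    haveI : Finite (commutatorSet G) := finite_commutatorSet_of_finite_quot_center
    haveI : Finite (_root_.commutator G) := inferInstance
    haveI : Finite (G ⧸ _root_.commutator G) := hab
    exact Finite.of_subgroup_quotient (_root_.commutator G)

/-- If `G` is an infinite, finitely generated, nilpotent group, then there exists a
surjective group homomorphism from `G` onto the integers `ℤ`. -/
theorem infinite_fg_nilpotent_surjects_onto_int
    (G : Type*) [Group G] [Group.IsNilpotent G] (hfg : Group.FG G) [Infinite G] :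
    ∃ f : G →* Multiplicative ℤ, Function.Surjective f := by
  haveI := hfg
  haveI : Infinite (Abelianization G) := by
    by_contra h
    rw [not_infinite_iff_finite] at h
    haveI : Finite G := finite_of_fg_nilpotent_finite_abelianization G hfg h
    exact not_finite G
  -- The abelianization is a f.g. infinite abelian group
  haveI : Group.FG (Abelianization G) := Group.fg_of_surjective
    (f := Abelianization.of) (fun y => QuotientGroup.induction_on y fun g => ⟨g, rfl⟩)
  set A := Additive (Abelianization G)
  haveI : AddGroup.FG A := inferInstance
  obtain ⟨n, ι, hι, p, hp, e, ⟨eqv⟩⟩ := AddCommGroup.equiv_free_prod_directSum_zmod A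
  rcases Nat.eq_zero_or_pos n with hn | hn
  · exfalso
    subst hn
    haveI : ∀ i : ι, NeZero (p i ^ e i) := by
      intro i
      exact ⟨pow_ne_zero _ (hp i).pos.ne'⟩
    haveI : Finite (Fin 0 →₀ ℤ) := by
      haveI : Subsingleton (Fin 0 →₀ ℤ) := by
        constructor; intro a b; ext i; exact absurd i.2 (Nat.not_lt_zero _)
      infer_instance
    haveI : Finite (DirectSum ι fun i => ZMod (p i ^ e i)) :=
      Finite.of_equiv _ DFinsupp.equivFunOnFintype.symm
    haveI : Finite ((Fin 0 →₀ ℤ) × DirectSum ι fun i => ZMod (p i ^ e i)) :=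
      Finite.instProd
    haveI : Finite A := Finite.of_equiv _ eqv.symm.toEquiv
    exact not_finite A
  · -- project to the first ℤ factor
    let π : A →+ ℤ :=
      (Finsupp.applyAddHom (⟨0, hn⟩ : Fin n)).comp
        ((AddMonoidHom.fst _ _).comp eqv.toAddMonoidHom)
    have hπ : Function.Surjective π := by
      intro m
      refine ⟨eqv.symm (Finsupp.single ⟨0, hn⟩ m, 0), ?_⟩
      simp [π]
    let φ : Abelianization G →* Multiplicative ℤ := AddMonoidHom.toMultiplicativeRight π
    refine ⟨φ.comp Abelianization.of, ?_⟩
    have hof : Function.Surjective (Abelianization.of (G := G)) := fun y =>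
      QuotientGroup.induction_on y fun g => ⟨g, rfl⟩
    have hφ : Function.Surjective φ := by
      intro m
      obtain ⟨a, ha⟩ := hπ (Multiplicative.toAdd m)
      exact ⟨Additive.toMul a, by simpa [φ, AddMonoidHom.coe_toMultiplicativeRight] using congrArg Multiplicative.ofAdd ha⟩
    exact hφ.comp hof
end

section
/- If G is a nontrivial, torsion-free, finitely generated, nilpotent group, then there exists a surjective group homomorphism from G onto the integers ℤ. -/
open Subgroup
open scoped commutatorElement

private lemma conj_pow_of_central {H : Type*} [Group H] (x y c : H)
    (hc : ∀ z, c * z = z * c) (h : x * y * x⁻¹ = c * y) (n : ℕ) :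
    x ^ n * y * (x ^ n)⁻¹ = c ^ n * y := by
  induction n with
  | zero => simp
  | succ n ih =>
    have hcx : Commute c x := hc x
    have hcn : c ^ n * x = x * c ^ n := ((hcx.pow_left n).eq)
    calc x ^ (n + 1) * y * (x ^ (n + 1))⁻¹
        = x * (x ^ n * y * (x ^ n)⁻¹) * x⁻¹ := by rw [pow_succ']; group
      _ = x * (c ^ n * y) * x⁻¹ := by rw [ih]
      _ = (x * c ^ n) * (y * x⁻¹) := by group
      _ = c ^ n * (x * y * x⁻¹) := by rw [← hcn]; group
      _ = c ^ n * (c * y) := by rw [h]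
      _ = c ^ (n + 1) * y := by rw [pow_succ]; group

private lemma quot_comm_of_mem {G : Type*} [Group G] (N : Subgroup G) [N.Normal]
    {x y : G} (h : x * y * x⁻¹ * y⁻¹ ∈ N) :
    (QuotientGroup.mk' N) x * (QuotientGroup.mk' N) y
      = (QuotientGroup.mk' N) y * (QuotientGroup.mk' N) x := by
  set φ := QuotientGroup.mk' N
  have h1 : φ (x * y * x⁻¹ * y⁻¹) = 1 := (QuotientGroup.eq_one_iff _).mpr h
  have h2 : ⁅φ x, φ y⁆ = 1 := by
    simpa [commutatorElement_def, map_mul, map_inv] using h1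
  exact commutatorElement_eq_one_iff_mul_comm.mp h2

private lemma isolated_step {G : Type*} [Group G] (htf : ∀ g : G, g ≠ 1 → ¬IsOfFinOrder g) :
    ∀ i (x : G) (n : ℕ), 0 < n → x ^ n ∈ Subgroup.upperCentralSeries G i →
      x ∈ Subgroup.upperCentralSeries G (i + 1) → x ∈ Subgroup.upperCentralSeries G i := by
  intro i
  induction i with
  | zero =>
    intro x n hn hxn _
    rw [Subgroup.upperCentralSeries_zero, Subgroup.mem_bot] at hxn ⊢
    by_contra hx
    exact htf x hx (isOfFinOrder_iff_pow_eq_one.mpr ⟨n, hn, hxn⟩)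
  | succ i ih =>
    intro x n hn hxn hx1
    rw [Subgroup.mem_upperCentralSeries_succ_iff] at hx1 ⊢
    intro y
    set N := Subgroup.upperCentralSeries G i with hN
    set c := x * y * x⁻¹ * y⁻¹ with hcdef
    have hc : c ∈ Subgroup.upperCentralSeries G (i + 1) := hx1 y
    refine ih c n hn ?_ hc
    -- work in the quotient G ⧸ N
    set φ : G →* G ⧸ N := QuotientGroup.mk' N with hφ
    have hcent : ∀ z : G ⧸ N, φ c * z = z * φ c := by
      intro z
      obtain ⟨w, rfl⟩ := QuotientGroup.mk'_surjective N z
      exact quot_comm_of_mem N ((Subgroup.mem_upperCentralSeries_succ_iff.mp hc) w)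
    have hconj : φ x * φ y * (φ x)⁻¹ = φ c * φ y := by
      have hcy : c * y = x * y * x⁻¹ := by rw [hcdef]; group
      calc φ x * φ y * (φ x)⁻¹ = φ (x * y * x⁻¹) := by simp [map_mul, map_inv]
        _ = φ (c * y) := by rw [← hcy]
        _ = φ c * φ y := by simp [map_mul]
    have key := conj_pow_of_central (φ x) (φ y) (φ c) hcent hconj n
    -- since x ^ n ∈ Z_{i+1}, φ (x ^ n) commutes with φ y
    have hcomm : φ (x ^ n) * φ y * (φ (x ^ n))⁻¹ = φ y := by
      have h2 := quot_comm_of_mem N ((Subgroup.mem_upperCentralSeries_succ_iff.mp hxn) y)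
      rw [h2]
      exact mul_inv_cancel_right _ _
    have hxpow : (φ x) ^ n = φ (x ^ n) := (map_pow φ x n).symm
    rw [hxpow, hcomm] at key
    have hone : (φ c) ^ n = 1 :=
      mul_right_cancel (b := φ y) (by rw [one_mul]; exact key.symm)
    have hcn1 : φ (c ^ n) = 1 := by rw [map_pow]; exact hone
    exact (QuotientGroup.eq_one_iff _).mp hcn1

private lemma isolated {G : Type*} [Group G] [Group.IsNilpotent G]
    (htf : ∀ g : G, g ≠ 1 → ¬IsOfFinOrder g) (i : ℕ) (x : G) (n : ℕ) (hn : 0 < n)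
    (hxn : x ^ n ∈ Subgroup.upperCentralSeries G i) : x ∈ Subgroup.upperCentralSeries G i := by
  obtain ⟨m, hm⟩ := Group.IsNilpotent.nilpotent (G := G)
  have aux : ∀ j (x : G), x ∈ Subgroup.upperCentralSeries G (i + j) →
      x ^ n ∈ Subgroup.upperCentralSeries G i → x ∈ Subgroup.upperCentralSeries G i := by
    intro j
    induction j with
    | zero => intro x hx _; simpa using hx
    | succ j ih =>
      intro x hx hxn
      have hxnj : x ^ n ∈ Subgroup.upperCentralSeries G (i + j) :=
        Subgroup.upperCentralSeries_mono G (Nat.le_add_right i j) hxn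
      exact ih x (isolated_step htf (i + j) x n hn hxnj hx) hxn
  exact aux m x (by rw [show Subgroup.upperCentralSeries G (i + m) = ⊤ from
    top_le_iff.mp (hm ▸ Subgroup.upperCentralSeries_mono G (Nat.le_add_left m i))]; trivial) hxn

/-- If `G` is a nontrivial, torsion-free, finitely generated, nilpotent group, then there
exists a surjective group homomorphism from `G` onto the integers `ℤ`. -/
theorem nontrivial_torsionfree_fg_nilpotent_surjects_onto_int
    (G : Type*) [Group G] [Group.IsNilpotent G] (hfg : Group.FG G)
    (htf : ∀ g : G, g ≠ 1 → ¬IsOfFinOrder g) [Nontrivial G] :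
    ∃ f : G →* Multiplicative ℤ, Function.Surjective f := by
  classical
  haveI := hfg
  obtain ⟨m, hm⟩ := Group.IsNilpotent.nilpotent (G := G)
  -- take the least index where the upper central series becomes ⊤
  have hex : ∃ n, Subgroup.upperCentralSeries G n = ⊤ := ⟨m, hm⟩
  have hn0 : Subgroup.upperCentralSeries G (Nat.find hex) = ⊤ := Nat.find_spec hex
  have hn0ne : Nat.find hex ≠ 0 := by
    intro h
    rw [h, Subgroup.upperCentralSeries_zero] at hn0
    exact bot_ne_top hn0
  obtain ⟨k, hk⟩ : ∃ k, Nat.find hex = k + 1 :=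
    ⟨Nat.find hex - 1, (Nat.succ_pred_eq_of_pos (Nat.pos_of_ne_zero hn0ne)).symm⟩
  set N := Subgroup.upperCentralSeries G k with hNdef
  have hNne : N ≠ ⊤ := Nat.find_min hex (by omega)
  have hsucc : Subgroup.upperCentralSeries G (k + 1) = ⊤ := by rw [← hk]; exact hn0
  set φ : G →* G ⧸ N := QuotientGroup.mk' N with hφ
  have hφsurj : Function.Surjective φ := QuotientGroup.mk'_surjective N
  -- G ⧸ N is commutative
  have hcomm : ∀ a b : G ⧸ N, a * b = b * a := by
    intro a b
    obtain ⟨x, rfl⟩ := hφsurj a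
    obtain ⟨y, rfl⟩ := hφsurj b
    have hx : x ∈ Subgroup.upperCentralSeries G (k + 1) := by rw [hsucc]; trivial
    exact quot_comm_of_mem N ((Subgroup.mem_upperCentralSeries_succ_iff.mp hx) y)
  letI : CommGroup (G ⧸ N) := { (inferInstance : Group (G ⧸ N)) with mul_comm := hcomm }
  -- nontrivial
  have hexists : ∃ x : G, x ∉ N := by
    by_contra h
    push_neg at h
    exact hNne ((Subgroup.eq_top_iff' N).mpr h)
  obtain ⟨x0, hx0⟩ := hexists
  haveI : Nontrivial (G ⧸ N) :=
    ⟨⟨φ x0, 1, fun h => hx0 ((QuotientGroup.eq_one_iff _).mp h)⟩⟩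
  -- torsion-freeness of the quotient
  have hqtf : ∀ (q : G ⧸ N) (n : ℕ), 0 < n → q ^ n = 1 → q = 1 := by
    intro q n hn hq
    obtain ⟨x, rfl⟩ := hφsurj q
    have hx1 : φ (x ^ n) = 1 := by rw [map_pow]; exact hq
    have hxn : x ^ n ∈ N := (QuotientGroup.eq_one_iff _).mp hx1
    exact (QuotientGroup.eq_one_iff _).mpr (isolated htf k x n hn hxn)
  -- pass to the additive group
  haveI : Nontrivial (Additive (G ⧸ N)) := ‹Nontrivial (G ⧸ N)›
  haveI : Group.FG (G ⧸ N) := Group.fg_of_surjective hφsurj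
  haveI : AddGroup.FG (Additive (G ⧸ N)) := AddGroup.fg_of_group_fg
  haveI : Module.Finite ℤ (Additive (G ⧸ N)) := Module.Finite.iff_addGroup_fg.mpr ‹_›
  haveI : NoZeroSMulDivisors ℤ (Additive (G ⧸ N)) := by
    constructor
    intro c a hca
    by_cases hc : c = 0
    · exact Or.inl hc
    · refine Or.inr ?_
      have hq : (a.toMul : G ⧸ N) ^ c = 1 := by
        have h' : (c • a).toMul = (1 : G ⧸ N) := by rw [hca]; rfl
        rw [← h']
        rfl
      have hnat : (a.toMul : G ⧸ N) ^ c.natAbs = 1 := by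
        rcases Int.natAbs_eq c with h | h
        · rw [← zpow_natCast, ← h, hq]
        · have h2 : (a.toMul : G ⧸ N) ^ (-(c.natAbs : ℤ)) = 1 := by rw [← h, hq]
          rw [zpow_neg, inv_eq_one, zpow_natCast] at h2
          exact h2
      exact hqtf _ c.natAbs (Int.natAbs_pos.mpr hc) hnat
  haveI : Module.Free ℤ (Additive (G ⧸ N)) := Module.free_of_finite_type_torsion_free'
  let b := Module.Free.chooseBasis ℤ (Additive (G ⧸ N))
  obtain ⟨i⟩ := b.index_nonempty
  let g : Additive (G ⧸ N) →+ ℤ := (b.coord i).toAddMonoidHom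
  have hgsurj : Function.Surjective g := by
    intro z
    refine ⟨z • b i, ?_⟩
    have hb1 : b.coord i (b i) = 1 := by
      simp [Module.Basis.coord_apply, Module.Basis.repr_self]
    simp only [g, LinearMap.toAddMonoidHom_coe, map_zsmul, hb1, smul_eq_mul, mul_one]
  refine ⟨{ toFun := fun x => Multiplicative.ofAdd (g (Additive.ofMul (φ x)))
            map_one' := by simp
            map_mul' := by
              intro x y
              simp only [map_mul]
              rw [show Additive.ofMul (φ x * φ y)
                  = Additive.ofMul (φ x) + Additive.ofMul (φ y) from rfl]
              rw [map_add]
              rfl }, ?_⟩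
  intro z
  obtain ⟨a, ha⟩ := hgsurj z.toAdd
  obtain ⟨x, hx⟩ := hφsurj a.toMul
  refine ⟨x, ?_⟩
  simp only [MonoidHom.coe_mk, OneHom.coe_mk]
  rw [show Additive.ofMul (φ x) = a by rw [hx]; rfl, ha]
  rfl
end

section
/- Let n be a natural number and let G be a nontrivial subgroup of the unitriangular group UTₙ(ℤ). Then there exists a surjective group homomorphism from G onto the integers ℤ. -/
/-- Let `G` be a nontrivial subgroup of the unitriangular group `UTₙ(ℤ)`, realized as a
subgroup of `GLₙ(ℤ)` all of whose elements are unitriangular (ones on the diagonal, zeros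
below it).  Then there exists a surjective group homomorphism from `G` onto the integers. -/
theorem nontrivial_subgroup_of_unitriangular_surjects_onto_int
    (n : ℕ) (G : Subgroup (Matrix.GeneralLinearGroup (Fin n) ℤ))
    (hG : ∀ M ∈ G, (∀ i : Fin n, (M : Matrix (Fin n) (Fin n) ℤ) i i = 1) ∧
      (∀ i j : Fin n, j < i → (M : Matrix (Fin n) (Fin n) ℤ) i j = 0))
    (hnt : G ≠ ⊥) :
    ∃ f : G →* Multiplicative ℤ, Function.Surjective f := by
  classical
  -- get a nontrivial element
  obtain ⟨M₀, hM₀G, hM₀ne⟩ : ∃ M₀ ∈ G, M₀ ≠ 1 := by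
    by_contra h
    push_neg at h
    exact hnt (Subgroup.eq_bot_iff_forall G |>.2 h)
  -- the predicate for offsets
  set P : ℕ → Prop := fun d => 0 < d ∧ ∃ M ∈ G, ∃ i j : Fin n,
      (i : ℕ) + d = (j : ℕ) ∧ (M : Matrix (Fin n) (Fin n) ℤ) i j ≠ 0 with hP
  have hPex : ∃ d, P d := by
    have hne : (M₀ : Matrix (Fin n) (Fin n) ℤ) ≠ (1 : Matrix (Fin n) (Fin n) ℤ) := by
      intro h
      apply hM₀ne
      ext i j
      rw [h, Matrix.GeneralLinearGroup.coe_one]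
    obtain ⟨i, j, hij⟩ : ∃ i j, (M₀ : Matrix (Fin n) (Fin n) ℤ) i j ≠
        (1 : Matrix (Fin n) (Fin n) ℤ) i j := by
      by_contra h; push_neg at h; exact hne (by ext i j; exact h i j)
    rcases lt_trichotomy i j with hlt | heq | hgt
    · have hlt' := Fin.lt_iff_val_lt_val.1 hlt
      have h1 : (i : ℕ) + ((j : ℕ) - (i : ℕ)) = (j : ℕ) := by omega
      have h2 : (M₀ : Matrix (Fin n) (Fin n) ℤ) i j ≠ 0 := by
        intro h
        apply hij
        rw [h]
        exact (Matrix.one_apply_ne (ne_of_lt hlt)).symm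
      exact ⟨(j : ℕ) - (i : ℕ), by omega, M₀, hM₀G, i, j, h1, h2⟩
    · exact absurd (by rw [heq, (hG M₀ hM₀G).1 j, Matrix.one_apply_eq]) hij
    · exact absurd (by rw [(hG M₀ hM₀G).2 i j hgt,
        Matrix.one_apply_ne (fun hh => absurd hh.symm (ne_of_lt hgt))]) hij
  set d := Nat.find hPex with hd
  obtain ⟨hdpos, M₁', hM₁'G, i₀, j₀, hij₀, hv₀⟩ : P d := Nat.find_spec hPex
  have hmin : ∀ M ∈ G, ∀ i j : Fin n, (i : ℕ) < (j : ℕ) → (j : ℕ) - (i : ℕ) < d →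
      (M : Matrix (Fin n) (Fin n) ℤ) i j = 0 := by
    intro M hM i j h1 h2
    by_contra h
    exact Nat.find_min hPex (m := (j : ℕ) - (i : ℕ)) h2 ⟨by omega, M, hM, i, j, by omega, h⟩
  have hi₀j₀ : (i₀ : ℕ) < (j₀ : ℕ) := by omega
  have hi₀j₀' : i₀ ≠ j₀ := fun h => by rw [h] at hi₀j₀; omega
  -- the valuation
  set v : G → ℤ := fun M => ((M : Matrix.GeneralLinearGroup (Fin n) ℤ) :
      Matrix (Fin n) (Fin n) ℤ) i₀ j₀ with hv
  have hadd : ∀ M N : G, v (M * N) = v M + v N := by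
    intro M N
    have hMG : (M : Matrix.GeneralLinearGroup (Fin n) ℤ) ∈ G := M.2
    have hNG : (N : Matrix.GeneralLinearGroup (Fin n) ℤ) ∈ G := N.2
    set A : Matrix (Fin n) (Fin n) ℤ :=
      (((M : Matrix.GeneralLinearGroup (Fin n) ℤ) : Matrix (Fin n) (Fin n) ℤ)) with hA
    set B : Matrix (Fin n) (Fin n) ℤ :=
      (((N : Matrix.GeneralLinearGroup (Fin n) ℤ) : Matrix (Fin n) (Fin n) ℤ)) with hB
    have hcoe : v (M * N) = (A * B) i₀ j₀ := rfl
    rw [hcoe, Matrix.mul_apply]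
    have key : ∀ k : Fin n, A i₀ k * B k j₀ =
        (if k = i₀ then B i₀ j₀ else 0) + (if k = j₀ then A i₀ j₀ else 0) := by
      intro k
      rcases lt_trichotomy (k : ℕ) (i₀ : ℕ) with hk | hk | hk
      · have h1 : A i₀ k = 0 := (hG _ hMG).2 i₀ k (Fin.lt_iff_val_lt_val.2 hk)
        have h2 : k ≠ i₀ := fun h => by rw [h] at hk; omega
        have h3 : k ≠ j₀ := fun h => by rw [h] at hk; omega
        simp [h1, h2, h3]
      · have hk' : k = i₀ := Fin.ext hk
        have h1 : A i₀ i₀ = 1 := (hG _ hMG).1 i₀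
        simp [hk', h1]
        intro h; exact absurd h hi₀j₀'
      · rcases lt_trichotomy (k : ℕ) (j₀ : ℕ) with hk2 | hk2 | hk2
        · have h1 : A i₀ k = 0 := hmin _ hMG i₀ k hk (by omega)
          have h2 : k ≠ i₀ := fun h => by rw [h] at hk; omega
          have h3 : k ≠ j₀ := fun h => by rw [h] at hk2; omega
          simp [h1, h2, h3]
        · have hk' : k = j₀ := Fin.ext hk2
          have h1 : B j₀ j₀ = 1 := (hG _ hNG).1 j₀
          have h2 : j₀ ≠ i₀ := hi₀j₀'.symm
          simp [hk', h1, h2]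
        · have h1 : B k j₀ = 0 := (hG _ hNG).2 k j₀ (Fin.lt_iff_val_lt_val.2 hk2)
          have h2 : k ≠ i₀ := fun h => by rw [h] at hk; omega
          have h3 : k ≠ j₀ := fun h => by rw [h] at hk2; omega
          simp [h1, h2, h3]
    rw [Finset.sum_congr rfl (fun k _ => key k), Finset.sum_add_distrib,
      Finset.sum_ite_eq' Finset.univ i₀ (fun _ => B i₀ j₀),
      Finset.sum_ite_eq' Finset.univ j₀ (fun _ => A i₀ j₀)]
    simp [add_comm]
    rfl
  have hv1 : v 1 = 0 := by
    have := hadd 1 1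
    rw [mul_one] at this
    omega
  have hinv : ∀ M : G, v M⁻¹ = - v M := by
    intro M
    have := hadd M M⁻¹
    rw [mul_inv_cancel, hv1] at this
    omega
  -- the range as an additive subgroup of ℤ
  set H : AddSubgroup ℤ :=
    { carrier := Set.range v
      zero_mem' := ⟨1, hv1⟩
      add_mem' := by rintro a b ⟨x, rfl⟩ ⟨y, rfl⟩; exact ⟨x * y, hadd x y⟩
      neg_mem' := by rintro a ⟨x, rfl⟩; exact ⟨x⁻¹, hinv x⟩ } with hH
  obtain ⟨a, ha⟩ := Int.subgroup_cyclic H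
  have hdvd : ∀ M : G, a ∣ v M := by
    intro M
    have : v M ∈ H := ⟨M, rfl⟩
    rw [ha, AddSubgroup.mem_closure_singleton] at this
    obtain ⟨k, hk⟩ := this
    exact ⟨k, by rw [← hk, smul_eq_mul, mul_comm]⟩
  have hM₁ : v ⟨M₁', hM₁'G⟩ ≠ 0 := hv₀
  have ha0 : a ≠ 0 := by
    rintro rfl
    obtain ⟨k, hk⟩ := hdvd ⟨M₁', hM₁'G⟩
    simp at hk
    exact hM₁ hk
  have haH : a ∈ H := by
    rw [ha]; exact AddSubgroup.subset_closure rfl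
  obtain ⟨Ma, hMa⟩ := haH
  -- build the homomorphism
  refine ⟨MonoidHom.mk' (fun M => Multiplicative.ofAdd (v M / a)) ?_, ?_⟩
  · intro M N
    obtain ⟨p, hp⟩ := hdvd M
    obtain ⟨q, hq⟩ := hdvd N
    have : v (M * N) / a = v M / a + v N / a := by
      rw [hadd, hp, hq, ← mul_add, Int.mul_ediv_cancel_left _ ha0,
        Int.mul_ediv_cancel_left _ ha0, Int.mul_ediv_cancel_left _ ha0]
    simp only [this]
    rfl
  · intro m
    refine ⟨Ma ^ (Multiplicative.toAdd m), ?_⟩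
    have hpow : v (Ma ^ (Multiplicative.toAdd m)) = (Multiplicative.toAdd m) * a := by
      set k := Multiplicative.toAdd m
      induction k using Int.induction_on with
      | zero => simpa using hv1
      | succ j ih =>
          rw [zpow_add_one, hadd, ih, hMa]
          ring
      | pred j ih =>
          rw [zpow_sub_one, hadd, ih, hinv, hMa]
          ring
    simp only [MonoidHom.mk'_apply, hpow, Int.mul_ediv_cancel _ ha0]
    rfl
end

section
/- Let A, A', G, G' be groups and let A'', G'' be types with distinguished basepoints a₀ ∈ A'' and g₀ ∈ G''. Suppose given group homomorphisms i : A → A', r : A → G, r' : A' → G', I : G → G' and functions q : A' → A'', Q : G' → G'', r'' : A'' → G'' satisfying: (1) i is injective; (2) for every y ∈ A', q(y) = a₀ if and only if y lies in the range of i; (3) for all y, y' ∈ A', if q(y) = q(y') then q(y' · y⁻¹) = a₀; (4) Q(I(g)) = g₀ for every g ∈ G; (5) r' ∘ i = I ∘ r and r'' ∘ q = Q ∘ r'; (6) the fiber (r'')⁻¹(g₀) is finite; and (7) the kernel of r' is finite. Then the kernel of r is finite, and the subgroup range(I ∘ r) of G' has finite index in the subgroup range(r') ⊓ range(I) of G';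 indeed this index is at most the cardinality of the fiber (r'')⁻¹(g₀). -/
/-- Fact 1.7 (KernelAlgGroups): given a map of exact sequences of pointed sets
```
1 → A  → A'  → A''
1 → G  → G'  → G''
```
where `i : A → A'`, `r : A → G`, `r' : A' → G'`, `I : G → G'` are group homomorphisms and
`q : A' → A''`, `Q : G' → G''`, `r'' : A'' → G''` are functions satisfying the listed
exactness and compatibility conditions, if `r''` has finite fiber over the basepoint and
`r'` has finite kernel, then `r` has finite kernel and the subgroup `range (I ∘ r)` has
finite index in `range r' ⊓ range I`, bounded by the cardinality of the fiber of `r''`. -/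
theorem kernel_alg_groups
    (A A' G G' : Type*) [Group A] [Group A'] [Group G] [Group G']
    (A'' G'' : Type*) (a₀ : A'') (g₀ : G'')
    (i : A →* A') (r : A →* G) (r' : A' →* G') (I : G →* G')
    (q : A' → A'') (Q : G' → G'') (r'' : A'' → G'')
    (h1 : Function.Injective i)
    (h2 : ∀ y : A', q y = a₀ ↔ y ∈ i.range)
    (h3 : ∀ y y' : A', q y = q y' → q (y' * y⁻¹) = a₀)
    (h4 : ∀ g : G, Q (I g) = g₀)
    (h5 : r'.comp i = I.comp r)
    (h5' : ∀ y : A', r'' (q y) = Q (r' y))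
    (h6 : (r'' ⁻¹' {g₀}).Finite)
    (h7 : ((r'.ker : Subgroup A') : Set A').Finite) :
    ((r.ker : Subgroup A) : Set A).Finite ∧
      (I.comp r).range.relIndex (r'.range ⊓ I.range) ≠ 0 ∧
      (I.comp r).range.relIndex (r'.range ⊓ I.range) ≤ Nat.card (r'' ⁻¹' {g₀}) := by
  classical
  have hfib := h6.to_subtype
  refine ⟨?_, ?_⟩
  · -- kernel of r is finite
    have hker' : Finite (r'.ker : Set A') := h7.to_subtype
    have : Finite (r.ker : Set A) := by
      refine Finite.of_injective (fun a : (r.ker : Set A) => (⟨i a, ?_⟩ : (r'.ker : Set A'))) ?_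
      · have h5a := DFunLike.congr_fun h5 (a : A)
        have : r (a : A) = 1 := a.2
        simp only [MonoidHom.comp_apply] at h5a
        simp [MonoidHom.mem_ker, h5a, this]
      · intro a b hab
        exact Subtype.ext (h1 (congrArg Subtype.val hab))
    exact Set.toFinite _
  · set K := r'.range ⊓ I.range with hK
    set H := (I.comp r).range with hH
    have hy : ∀ k : K, ∃ y : A', r' y = (k : G')⁻¹ := by
      rintro ⟨k, ⟨⟨y, hy⟩, -⟩⟩
      exact ⟨y⁻¹, by simp [hy]⟩
    choose y hyv using hy
    let f : K ⧸ H.subgroupOf K → (r'' ⁻¹' {g₀} : Set A'') := fun x =>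
      ⟨q (y x.out), by
        obtain ⟨g, hg⟩ := x.out.2.2
        have : r'' (q (y x.out)) = g₀ := by
          rw [h5', hyv, ← hg, ← map_inv, h4]
        simpa using this⟩
    have hfinj : Function.Injective f := by
      intro x₁ x₂ hx
      have hq : q (y x₁.out) = q (y x₂.out) := congrArg Subtype.val hx
      obtain ⟨a, ha⟩ := (h2 _).1 (h3 _ _ hq)
      have hra : r' (i a) = ((x₂.out : G')⁻¹ * (x₁.out : G')) := by
        rw [ha, map_mul, map_inv, hyv, hyv, inv_inv]
      have hmem : ((x₂.out)⁻¹ * x₁.out : K) ∈ H.subgroupOf K := by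
        refine Subgroup.mem_subgroupOf.2 ⟨a, ?_⟩
        have h5a := DFunLike.congr_fun h5 a
        simp only [MonoidHom.comp_apply] at h5a ⊢
        rw [← h5a, hra]
        simp
      exact (Quotient.out_equiv_out.mp ((QuotientGroup.leftRel_apply).mpr hmem)).symm
    have hfinite : Finite (K ⧸ H.subgroupOf K) := Finite.of_injective f hfinj
    have hcard : H.relIndex K = Nat.card (K ⧸ H.subgroupOf K) := rfl
    constructor
    · rw [hcard]
      exact Nat.card_ne_zero.2 ⟨inferInstance, inferInstance⟩
    · rw [hcard]
      exact Nat.card_le_card_of_injective f hfinj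
end
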